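/- arXiv:2208.11485 — 3 statements merged into one kernel-verified Lean document; each statement's English description precedes it below -/
import Mathlib

section
/- (Lemma 2, inequality (c1), single-sequence form.) Let E be a real normed vector space, let φ : ℕ → E, let φ̄ ∈ E, let ι ≥ 0 with ‖φ̄‖ ≤ ι and ‖φ(t)‖ ≤ ι for all t ∈ ℕ, let d ∈ ℕ, and let T ∈ ℕ with T ≥ 2d+1. Then Σ_{t=0}^{T} (‖φ̄ − φ(t+1)‖² − ‖φ̄ − φ((t−d)⁺)‖²) ≤ ‖φ̄ − φ(T+1)‖² + 4·d·ι². -/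
/-- Lemma 2, inequality (c1), single-sequence form. -/
theorem delayed_norm_sq_diff_sum_le
    {E : Type*} [NormedAddCommGroup E] [NormedSpace ℝ E]
    (φ : ℕ → E) (φbar : E) (ι : ℝ) (hι : 0 ≤ ι)
    (hbar : ‖φbar‖ ≤ ι) (hφ : ∀ t : ℕ, ‖φ t‖ ≤ ι)
    (d T : ℕ) (hT : 2 * d + 1 ≤ T) :
    ∑ t ∈ Finset.range (T + 1), (‖φbar - φ (t + 1)‖ ^ 2 - ‖φbar - φ (t - d)‖ ^ 2)
      ≤ ‖φbar - φ (T + 1)‖ ^ 2 + 4 * d * ι ^ 2 := by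
  set a : ℕ → ℝ := fun s => ‖φbar - φ s‖ ^ 2 with ha
  have key : ∀ s, a s ≤ 4 * ι ^ 2 := by
    intro s
    have h1 : ‖φbar - φ s‖ ≤ 2 * ι := (norm_sub_le _ _).trans (by linarith [hφ s])
    have := pow_le_pow_left₀ (norm_nonneg (φbar - φ s)) h1 2
    simpa [ha] using this.trans_eq (by ring)
  have hdT : d ≤ T := by omega
  -- split the sum of differences
  rw [Finset.sum_sub_distrib]
  -- second sum: split into t ≤ d (where t - d = 0) and t > d
  have hsplit : ∑ t ∈ Finset.range (T + 1), a (t - d)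
      = ((d:ℝ) + 1) * a 0 + ∑ t ∈ Finset.Ico (d + 1) (T + 1), a (t - d) := by
    rw [Finset.range_eq_Ico, ← Finset.sum_Ico_consecutive _ (Nat.zero_le (d + 1)) (by omega)]
    congr 1
    rw [← Finset.range_eq_Ico]
    rw [Finset.sum_congr rfl (fun t ht => show a (t - d) = a 0 by
      have := Finset.mem_range.mp ht
      congr 1
      omega)]
    simp [Finset.sum_const, nsmul_eq_mul]
  have hreidx : ∑ t ∈ Finset.Ico (d + 1) (T + 1), a (t - d)
      = ∑ i ∈ Finset.range (T - d), a (i + 1) := by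
    rw [Finset.sum_Ico_eq_sum_range]
    have : T + 1 - (d + 1) = T - d := by omega
    rw [this]
    exact Finset.sum_congr rfl fun i _ => by congr 1; omega
  have hfirst : ∑ t ∈ Finset.range (T + 1), a (t + 1)
      - ∑ i ∈ Finset.range (T - d), a (i + 1)
      = ∑ i ∈ Finset.Ico (T - d) (T + 1), a (i + 1) := by
    rw [Finset.sum_Ico_eq_sub _ (by omega)]
  have htop : ∑ i ∈ Finset.Ico (T - d) (T + 1), a (i + 1)
      = a (T + 1) + ∑ i ∈ Finset.Ico (T - d) T, a (i + 1) := by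
    rw [Finset.sum_Ico_succ_top (by omega)]
    ring
  have hrest : ∑ i ∈ Finset.Ico (T - d) T, a (i + 1) ≤ (d : ℝ) * (4 * ι ^ 2) := by
    have := Finset.sum_le_card_nsmul (Finset.Ico (T - d) T) (fun i => a (i + 1))
      (4 * ι ^ 2) (fun i _ => key (i + 1))
    rw [Nat.card_Ico] at this
    have hcard : T - (T - d) = d := by omega
    rw [hcard] at this
    simpa [nsmul_eq_mul] using this
  have ha0 : 0 ≤ a 0 := by positivity
  have hd1 : (0:ℝ) ≤ ((d:ℝ) + 1) * a 0 := by positivity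
  have : ∑ t ∈ Finset.range (T + 1), a (t + 1) - ∑ t ∈ Finset.range (T + 1), a (t - d)
      = ∑ i ∈ Finset.Ico (T - d) (T + 1), a (i + 1) - ((d:ℝ) + 1) * a 0 := by
    rw [hsplit, hreidx, ← hfirst]; ring
  rw [this, htop]
  have : a (T + 1) = ‖φbar - φ (T + 1)‖ ^ 2 := rfl
  nlinarith [hrest, hd1]
end

section
/- (Lemma 2, inequality (c2), single-sequence form.) Let E be a real normed vector space, let φ : ℕ → E, let d ∈ ℕ, and let T ∈ ℕ. Then Σ_{t=0}^{T} ‖φ(t+1) − φ((t−d)⁺)‖² ≤ (d+1)²·Σ_{t=0}^{T} ‖φ(t+1) − φ(t)‖². -/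
/-- Lemma 2, inequality (c2), single-sequence form. -/
theorem delayed_increment_sum_sq_le
    {E : Type*} [NormedAddCommGroup E] [NormedSpace ℝ E]
    (φ : ℕ → E) (d T : ℕ) :
    ∑ t ∈ Finset.range (T + 1), ‖φ (t + 1) - φ (t - d)‖ ^ 2
      ≤ (d + 1 : ℝ) ^ 2 * ∑ t ∈ Finset.range (T + 1), ‖φ (t + 1) - φ t‖ ^ 2 := by
  set a : ℕ → ℝ := fun s => ‖φ (s + 1) - φ s‖ ^ 2 with ha
  have anonneg : ∀ s, 0 ≤ a s := fun s => by positivity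
  -- pointwise bound
  have key : ∀ t, ‖φ (t + 1) - φ (t - d)‖ ^ 2
      ≤ (d + 1 : ℝ) * ∑ s ∈ Finset.Ico (t - d) (t + 1), a s := by
    intro t
    have h1 : t - d ≤ t + 1 := le_trans (Nat.sub_le t d) (Nat.le_succ t)
    have tele : φ (t + 1) - φ (t - d)
        = ∑ s ∈ Finset.Ico (t - d) (t + 1), (φ (s + 1) - φ s) := by
      rw [Finset.sum_Ico_eq_sub _ h1, Finset.sum_range_sub, Finset.sum_range_sub]
      abel
    have hn : ‖φ (t + 1) - φ (t - d)‖
        ≤ ∑ s ∈ Finset.Ico (t - d) (t + 1), ‖φ (s + 1) - φ s‖ := by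
      rw [tele]; exact norm_sum_le _ _
    have hsq : ‖φ (t + 1) - φ (t - d)‖ ^ 2
        ≤ (∑ s ∈ Finset.Ico (t - d) (t + 1), ‖φ (s + 1) - φ s‖) ^ 2 :=
      pow_le_pow_left₀ (norm_nonneg _) hn 2
    have hcs := sq_sum_le_card_mul_sum_sq
      (s := Finset.Ico (t - d) (t + 1)) (f := fun s => ‖φ (s + 1) - φ s‖)
    have hcard : ((Finset.Ico (t - d) (t + 1)).card : ℝ) ≤ (d + 1 : ℝ) := by
      rw [Nat.card_Ico]
      have : t + 1 - (t - d) ≤ d + 1 := by omega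
      exact_mod_cast this
    calc ‖φ (t + 1) - φ (t - d)‖ ^ 2
        ≤ (∑ s ∈ Finset.Ico (t - d) (t + 1), ‖φ (s + 1) - φ s‖) ^ 2 := hsq
      _ ≤ ((Finset.Ico (t - d) (t + 1)).card : ℝ)
            * ∑ s ∈ Finset.Ico (t - d) (t + 1), a s := hcs
      _ ≤ (d + 1 : ℝ) * ∑ s ∈ Finset.Ico (t - d) (t + 1), a s := by
          apply mul_le_mul_of_nonneg_right hcard
          exact Finset.sum_nonneg fun s _ => anonneg s
  have step1 : ∑ t ∈ Finset.range (T + 1), ‖φ (t + 1) - φ (t - d)‖ ^ 2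
      ≤ (d + 1 : ℝ) * ∑ t ∈ Finset.range (T + 1),
          ∑ s ∈ Finset.Ico (t - d) (t + 1), a s := by
    rw [Finset.mul_sum]
    exact Finset.sum_le_sum fun t _ => key t
  have step2 : ∑ t ∈ Finset.range (T + 1), ∑ s ∈ Finset.Ico (t - d) (t + 1), a s
      ≤ (d + 1 : ℝ) * ∑ s ∈ Finset.range (T + 1), a s := by
    have hsub : ∀ t ∈ Finset.range (T + 1),
        ∑ s ∈ Finset.Ico (t - d) (t + 1), a s
          = ∑ s ∈ Finset.range (T + 1), if s ∈ Finset.Ico (t - d) (t + 1) then a s else 0 := by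
      intro t ht
      rw [Finset.sum_ite_mem, Finset.inter_comm]
      congr 1
      symm
      apply Finset.inter_eq_left.mpr
      intro s hs
      simp only [Finset.mem_Ico] at hs
      simp only [Finset.mem_range] at ht ⊢
      omega
    rw [Finset.sum_congr rfl hsub, Finset.sum_comm, Finset.mul_sum]
    apply Finset.sum_le_sum
    intro s _
    calc ∑ t ∈ Finset.range (T + 1), (if s ∈ Finset.Ico (t - d) (t + 1) then a s else 0)
        ≤ ∑ t ∈ Finset.Icc s (s + d), a s := by
          rw [← Finset.sum_filter]
          apply Finset.sum_le_sum_of_subset_of_nonneg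
          · intro t ht
            simp only [Finset.mem_filter, Finset.mem_range, Finset.mem_Ico] at ht
            simp only [Finset.mem_Icc]
            omega
          · intro _ _ _; exact anonneg s
      _ = ((s + d + 1 - s : ℕ) : ℝ) * a s := by
          rw [Finset.sum_const, Nat.card_Icc, nsmul_eq_mul]
      _ = (d + 1 : ℝ) * a s := by
          congr 1
          have : s + d + 1 - s = d + 1 := by omega
          rw [this]; push_cast; ring
  calc ∑ t ∈ Finset.range (T + 1), ‖φ (t + 1) - φ (t - d)‖ ^ 2
      ≤ (d + 1 : ℝ) * ∑ t ∈ Finset.range (T + 1),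
          ∑ s ∈ Finset.Ico (t - d) (t + 1), a s := step1
    _ ≤ (d + 1 : ℝ) * ((d + 1 : ℝ) * ∑ s ∈ Finset.range (T + 1), a s) := by
        apply mul_le_mul_of_nonneg_left step2 (by positivity)
    _ = (d + 1 : ℝ) ^ 2 * ∑ t ∈ Finset.range (T + 1), ‖φ (t + 1) - φ t‖ ^ 2 := by
        ring
end

section
/- (Per-step inequality (r1).) Under the stated setup, for every t ∈ ℕ, every a ∈ ℝⁿ, and every w ∈ ℝ^p: Φ(α(t+1)) − Φ(a) ≤ ½‖a − α(t)‖²_{C⁻¹} − ½‖a − α(t+1)‖²_{C⁻¹} − ½‖α(t) − α(t+1)‖²_{C⁻¹ − H} + ½‖w − ω((t−d)⁺)‖²_{S⁻¹} − ½‖w − ω(t+1)‖²_{S⁻¹} − ½‖ω((t−d)⁺) − ω(t+1)‖²_{S⁻¹} + ⟨ω(t+1), Z·a⟩ − ⟨w, Z·α(t+1)⟩ − ½‖a − α((t−d)⁺)‖²_{ZᵀSZ} + ½‖a − α(t+1)‖²_{ZᵀSZ} + ½‖α((t−d)⁺) − α(t+1)‖²_{ZᵀSZ}. -/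
open Matrix Finset

/-- The quadratic form `‖x‖²_A = xᵀ A x`. -/
noncomputable def qf {k : ℕ} (A : Matrix (Fin k) (Fin k) ℝ) (x : Fin k → ℝ) : ℝ :=
  x ⬝ᵥ (A *ᵥ x)

/-!
Each step is forward–backward splitting in the metric `C⁻¹`. The prox optimality of `α (t + 1)`,
together with convexity and the `H`-descent bound of `H_s`, gives the usual descent estimate via the
three-point identity `‖a - x‖² = ‖a - y‖² + 2⟨a - y, y - x⟩ + ‖x - y‖²`, up to the coupling term
`⟨a - α (t + 1), Zᵀω + ZᵀSZ α⟩` evaluated at the delayed index. Because the dual step satisfies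
`S⁻¹ (ω (t + 1) - ω ((t - d)⁺)) = Z α (t + 1)`, the same identity in the metrics `S⁻¹` and `ZᵀSZ`
turns that coupling term into the remaining six terms exactly.
-/

open Filter Topology

lemma nonneg_of_forall_mul_add_nonneg {D Q : ℝ}
    (h : ∀ l : ℝ, 0 < l → l ≤ 1 → 0 ≤ D + l * Q) : 0 ≤ D := by
  have hlim : Tendsto (fun l : ℝ => D + l * Q) (𝓝[>] 0) (𝓝 D) := by
    refine (Continuous.tendsto' ?_ 0 D ?_).mono_left nhdsWithin_le_nhds <;> first
      | fun_prop | simp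
  refine ge_of_tendsto hlim ?_
  filter_upwards [Ioo_mem_nhdsGT zero_lt_one] with l hl using h l hl.1 hl.2.le

section QuadraticForm

variable {k : ℕ} {A : Matrix (Fin k) (Fin k) ℝ}

lemma Matrix.IsSymm.dotProduct_mulVec_comm (hA : A.IsSymm) (x y : Fin k → ℝ) :
    x ⬝ᵥ (A *ᵥ y) = y ⬝ᵥ (A *ᵥ x) := by
  rw [← dotProduct_transpose_mulVec, hA.eq]

lemma qf_neg (x : Fin k → ℝ) : qf A (-x) = qf A x := by
  simp [qf, mulVec_neg]

lemma qf_smul (c : ℝ) (x : Fin k → ℝ) : qf A (c • x) = c ^ 2 * qf A x := by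
  simp only [qf, mulVec_smul, dotProduct_smul, smul_dotProduct, smul_eq_mul]
  ring

lemma qf_sub_matrix (B : Matrix (Fin k) (Fin k) ℝ) (x : Fin k → ℝ) :
    qf (A - B) x = qf A x - qf B x := by
  simp [qf, sub_mulVec, dotProduct_sub]

lemma qf_add (hA : A.IsSymm) (x y : Fin k → ℝ) :
    qf A (x + y) = qf A x + 2 * x ⬝ᵥ (A *ᵥ y) + qf A y := by
  simp only [qf, mulVec_add, dotProduct_add, add_dotProduct]
  rw [hA.dotProduct_mulVec_comm y x]
  ring

lemma qf_three_point (hA : A.IsSymm) (a b c : Fin k → ℝ) :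
    qf A (a - c) = qf A (a - b) + 2 * (a - b) ⬝ᵥ (A *ᵥ (b - c)) + qf A (c - b) := by
  rw [← qf_neg (c - b), neg_sub, ← qf_add hA, sub_add_sub_cancel]

end QuadraticForm

lemma ConvexOn.sub_le_dotProduct_of_prox {k : ℕ} {M : Matrix (Fin k) (Fin k) ℝ} (hM : M.IsSymm)
    {f : (Fin k → ℝ) → ℝ} (hf : ConvexOn ℝ Set.univ f) {u y : Fin k → ℝ}
    (hy : ∀ v, f y + 1 / 2 * qf M (y - u) ≤ f v + 1 / 2 * qf M (v - u)) (a : Fin k → ℝ) :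
    f y - f a ≤ (a - y) ⬝ᵥ (M *ᵥ (y - u)) := by
  -- compare `y` with the points `y + l • (a - y)` of the segment and let `l → 0⁺`
  suffices 0 ≤ f a - f y + (a - y) ⬝ᵥ (M *ᵥ (y - u)) by linarith
  refine nonneg_of_forall_mul_add_nonneg (Q := qf M (a - y) / 2) fun l hl0 hl1 => ?_
  have hconv : f (y + l • (a - y)) ≤ (1 - l) * f y + l * f a := by
    have := hf.2 (Set.mem_univ y) (Set.mem_univ a) (sub_nonneg.2 hl1) hl0.le (by ring)
    rwa [show (1 - l) • y + l • a = y + l • (a - y) by module] at this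
  have hmin := hy (y + l • (a - y))
  rw [show y + l • (a - y) - u = l • (a - y) + (y - u) by module, qf_add hM, qf_smul,
    smul_dotProduct, smul_eq_mul] at hmin
  refine nonneg_of_mul_nonneg_right ?_ hl0
  linarith

lemma forward_backward_descent {k : ℕ} {M H : Matrix (Fin k) (Fin k) ℝ} (hM : M.IsSymm)
    {f g : (Fin k → ℝ) → ℝ} {grad : (Fin k → ℝ) → Fin k → ℝ}
    (hf_conv : ∀ a b, f a + grad a ⬝ᵥ (b - a) ≤ f b)
    (hf_smooth : ∀ a b, f b ≤ f a + grad a ⬝ᵥ (b - a) + 1 / 2 * qf H (b - a))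
    (hg : ConvexOn ℝ Set.univ g) {x u y e : Fin k → ℝ} (hu : M *ᵥ (x - u) = grad x + e)
    (hy : ∀ v, g y + 1 / 2 * qf M (y - u) ≤ g v + 1 / 2 * qf M (v - u)) (a : Fin k → ℝ) :
    f y + g y - (f a + g a) ≤ 1 / 2 * qf M (a - x) - 1 / 2 * qf M (a - y)
      - 1 / 2 * qf (M - H) (x - y) + (a - y) ⬝ᵥ e := by
  have hprox := hg.sub_le_dotProduct_of_prox hM hy a
  rw [show y - u = (y - x) + (x - u) by abel, mulVec_add, hu] at hprox
  have hthree := qf_three_point hM a y x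
  have hH : qf H (y - x) = qf H (x - y) := by rw [← neg_sub, qf_neg]
  have hup := hf_smooth x y
  have hlow := hf_conv x a
  have hgrad : (a - y) ⬝ᵥ grad x = grad x ⬝ᵥ (a - x) - grad x ⬝ᵥ (y - x) := by
    simp only [dotProduct_sub, dotProduct_comm _ (grad x)]
    ring
  rw [dotProduct_add, dotProduct_add, hgrad] at hprox
  rw [qf_sub_matrix]
  linarith

lemma dotProduct_coupling_eq_of_dual_step {n p : ℕ} {S : Matrix (Fin p) (Fin p) ℝ} (hS : S.IsSymm)
    (hS_det : IsUnit S.det) (Z : Matrix (Fin p) (Fin n) ℝ) {y : Fin n → ℝ} {ω₀ ω₁ : Fin p → ℝ}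
    (hω : ω₁ = ω₀ + (S * Z) *ᵥ y) (a b : Fin n → ℝ) (w : Fin p → ℝ) :
    (a - y) ⬝ᵥ (Zᵀ *ᵥ ω₀ + (Zᵀ * S * Z) *ᵥ b)
      = 1 / 2 * qf S⁻¹ (w - ω₀) - 1 / 2 * qf S⁻¹ (w - ω₁) - 1 / 2 * qf S⁻¹ (ω₀ - ω₁)
        + ω₁ ⬝ᵥ (Z *ᵥ a) - w ⬝ᵥ (Z *ᵥ y)
        - 1 / 2 * qf (Zᵀ * S * Z) (a - b) + 1 / 2 * qf (Zᵀ * S * Z) (a - y)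
        + 1 / 2 * qf (Zᵀ * S * Z) (b - y) := by
  have hN : (Zᵀ * S * Z).IsSymm := by simp [IsSymm, transpose_mul, hS.eq, Matrix.mul_assoc]
  have hdual : S⁻¹ *ᵥ (ω₁ - ω₀) = Z *ᵥ y := by
    rw [hω, add_sub_cancel_left, mulVec_mulVec, ← Matrix.mul_assoc, nonsing_inv_mul S hS_det,
      Matrix.one_mul]
  rw [qf_three_point hS.inv w ω₁ ω₀, qf_three_point hN a y b, hdual]
  subst hω
  simp only [← mulVec_mulVec, dotProduct_transpose_mulVec, mulVec_sub, dotProduct_add,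
    dotProduct_sub, sub_dotProduct, add_dotProduct]
  ring

theorem asyn_ddpg_per_step_inequality_general
    (n p : ℕ) (Z : Matrix (Fin p) (Fin n) ℝ)
    (C Hm : Matrix (Fin n) (Fin n) ℝ) (S : Matrix (Fin p) (Fin p) ℝ)
    (hC : C.PosDef) (hS : S.PosDef)
    (d : ℕ)
    (Hs Hr : (Fin n → ℝ) → ℝ) (gs : (Fin n → ℝ) → (Fin n → ℝ))
    (hconv_s : ∀ a b : Fin n → ℝ, Hs a + gs a ⬝ᵥ (b - a) ≤ Hs b)
    (hsmooth : ∀ a b : Fin n → ℝ, Hs b ≤ Hs a + gs a ⬝ᵥ (b - a) + 1 / 2 * qf Hm (b - a))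
    (hr : ConvexOn ℝ Set.univ Hr)
    (α : ℕ → Fin n → ℝ) (ω : ℕ → Fin p → ℝ)
    (hα : ∀ t : ℕ, ∀ v : Fin n → ℝ,
      Hr (α (t + 1)) + 1 / 2 * qf C⁻¹ (α (t + 1) -
          (α t - C *ᵥ (gs (α t) + Zᵀ *ᵥ ω (t - d) + (Zᵀ * S * Z) *ᵥ α (t - d))))
        ≤ Hr v + 1 / 2 * qf C⁻¹ (v -
          (α t - C *ᵥ (gs (α t) + Zᵀ *ᵥ ω (t - d) + (Zᵀ * S * Z) *ᵥ α (t - d)))))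
    (hω : ∀ t : ℕ, ω (t + 1) = ω (t - d) + (S * Z) *ᵥ α (t + 1))
    (t : ℕ) (a : Fin n → ℝ) (w : Fin p → ℝ) :
    (Hs (α (t + 1)) + Hr (α (t + 1))) - (Hs a + Hr a)
      ≤ 1 / 2 * qf C⁻¹ (a - α t) - 1 / 2 * qf C⁻¹ (a - α (t + 1))
        - 1 / 2 * qf (C⁻¹ - Hm) (α t - α (t + 1))
        + 1 / 2 * qf S⁻¹ (w - ω (t - d)) - 1 / 2 * qf S⁻¹ (w - ω (t + 1))
        - 1 / 2 * qf S⁻¹ (ω (t - d) - ω (t + 1))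
        + ω (t + 1) ⬝ᵥ (Z *ᵥ a) - w ⬝ᵥ (Z *ᵥ α (t + 1))
        - 1 / 2 * qf (Zᵀ * S * Z) (a - α (t - d))
        + 1 / 2 * qf (Zᵀ * S * Z) (a - α (t + 1))
        + 1 / 2 * qf (Zᵀ * S * Z) (α (t - d) - α (t + 1)) := by
  have hC_symm : C.IsSymm := isHermitian_iff_isSymm.mp hC.isHermitian
  have hS_symm : S.IsSymm := isHermitian_iff_isSymm.mp hS.isHermitian
  have hstep := forward_backward_descent hC_symm.inv hconv_s hsmooth hr
    (by rw [sub_sub_cancel, mulVec_mulVec, nonsing_inv_mul C hC.det_pos.ne'.isUnit, Matrix.one_mulVec, add_assoc])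
    (hα t) a
  rw [dotProduct_coupling_eq_of_dual_step hS_symm hS.det_pos.ne'.isUnit Z (hω t) a (α (t - d)) w]
    at hstep
  linarith

/-- per-step inequality (r1) of the Asyn-DDPG algorithm. -/
theorem asyn_ddpg_per_step_inequality
    (n p : ℕ) (Z : Matrix (Fin p) (Fin n) ℝ)
    (C Hm : Matrix (Fin n) (Fin n) ℝ) (S : Matrix (Fin p) (Fin p) ℝ)
    (hC : C.PosDef) (hHm : Hm.PosDef) (hS : S.PosDef)
    (d : ℕ) (hd : 1 ≤ d)
    (Hs Hr : (Fin n → ℝ) → ℝ) (gs : (Fin n → ℝ) → (Fin n → ℝ))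
    (hconv_s : ∀ a b : Fin n → ℝ, Hs a + gs a ⬝ᵥ (b - a) ≤ Hs b)
    (hsmooth : ∀ a b : Fin n → ℝ, Hs b ≤ Hs a + gs a ⬝ᵥ (b - a) + 1 / 2 * qf Hm (b - a))
    (hr : ConvexOn ℝ Set.univ Hr)
    (α : ℕ → Fin n → ℝ) (ω : ℕ → Fin p → ℝ)
    (hα : ∀ t : ℕ, ∀ v : Fin n → ℝ,
      Hr (α (t + 1)) + 1 / 2 * qf C⁻¹ (α (t + 1) -
          (α t - C *ᵥ (gs (α t) + Zᵀ *ᵥ ω (t - d) + (Zᵀ * S * Z) *ᵥ α (t - d))))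
        ≤ Hr v + 1 / 2 * qf C⁻¹ (v -
          (α t - C *ᵥ (gs (α t) + Zᵀ *ᵥ ω (t - d) + (Zᵀ * S * Z) *ᵥ α (t - d)))))
    (hω : ∀ t : ℕ, ω (t + 1) = ω (t - d) + (S * Z) *ᵥ α (t + 1))
    (t : ℕ) (a : Fin n → ℝ) (w : Fin p → ℝ) :
    (Hs (α (t + 1)) + Hr (α (t + 1))) - (Hs a + Hr a)
      ≤ 1 / 2 * qf C⁻¹ (a - α t) - 1 / 2 * qf C⁻¹ (a - α (t + 1))
        - 1 / 2 * qf (C⁻¹ - Hm) (α t - α (t + 1))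
        + 1 / 2 * qf S⁻¹ (w - ω (t - d)) - 1 / 2 * qf S⁻¹ (w - ω (t + 1))
        - 1 / 2 * qf S⁻¹ (ω (t - d) - ω (t + 1))
        + ω (t + 1) ⬝ᵥ (Z *ᵥ a) - w ⬝ᵥ (Z *ᵥ α (t + 1))
        - 1 / 2 * qf (Zᵀ * S * Z) (a - α (t - d))
        + 1 / 2 * qf (Zᵀ * S * Z) (a - α (t + 1))
        + 1 / 2 * qf (Zᵀ * S * Z) (α (t - d) - α (t + 1)) :=
  asyn_ddpg_per_step_inequality_general n p Z C Hm S hC hS d Hs Hr gs hconv_s hsmooth hr α ω hα hω t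
    a w
end
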